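/- arXiv:1502.06362 — 3 statements merged into one kernel-verified Lean document; each statement's English description precedes it below -/
import Mathlib

section
/- Let C ⊆ R^n be a nonempty convex compact set and B an n×n real matrix. Suppose vectors w_1,…,w_N, u_1,…,u_N ∈ C satisfy (1/N)∑_t w_tᵀBu_t ≥ max_{w∈C} (1/N)∑_t wᵀBu_t − γ and (1/N)∑_t w_tᵀBu_t ≤ min_{u∈C} (1/N)∑_t w̄ᵀBu + γ, where w̄ = (1/N)∑_t w_t. Then min_{u∈C} w̄ᵀBu ≥ max_{w∈C} min_{u∈C} wᵀBu − 2γ. -/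
open Matrix Finset

/-! By bilinearity, the row player's average payoff against `u₁, …, u_N` is the payoff against
the averaged column strategy `ū`, which lies in `C` by convexity. Hence the row regret bound
controls `max_w wᵀBū`, which dominates `max_w min_u wᵀBu` because `ū` is one of the
admissible `u`; the column regret bound then links the average payoff to `min_u w̄ᵀBu`. -/

theorem Convex.inv_card_smul_sum_mem {ι E : Type*} [AddCommGroup E] [Module ℝ E]
    {C : Set E} (hC : Convex ℝ C) {s : Finset ι} (hs : s.Nonempty) {u : ι → E}
    (hu : ∀ t ∈ s, u t ∈ C) : (#s : ℝ)⁻¹ • ∑ t ∈ s, u t ∈ C := by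
  have hcard : (#s : ℝ) ≠ 0 := by simpa using hs.ne_empty
  simpa [Finset.smul_sum] using
    hC.sum_mem (w := fun _ => (#s : ℝ)⁻¹) (fun _ _ => by positivity) (by simp [hcard]) hu

theorem Matrix.dotProduct_mulVec_smul_sum {ι m n R : Type*} [Fintype m] [Fintype n]
    [CommSemiring R] (B : Matrix m n R) (w : m → R) (c : R) (s : Finset ι) (u : ι → n → R) :
    w ⬝ᵥ B *ᵥ (c • ∑ t ∈ s, u t) = c * ∑ t ∈ s, w ⬝ᵥ B *ᵥ u t := by
  rw [mulVec_smul, dotProduct_smul, mulVec_sum, dotProduct_sum, smul_eq_mul]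

theorem csSup_image_csInf_le_csSup {α β δ : Type*} [ConditionallyCompleteLattice δ]
    {S : Set α} {K : Set β} (f : α → β → δ) {y : β} (hy : y ∈ K) (hS : S.Nonempty)
    (hK : ∀ x ∈ S, BddBelow (f x '' K)) (hSy : BddAbove ((fun x => f x y) '' S)) :
    sSup ((fun x => sInf (f x '' K)) '' S) ≤ sSup ((fun x => f x y) '' S) := by
  refine csSup_le (hS.image _) ?_
  rintro _ ⟨x, hx, rfl⟩
  exact (csInf_le (hK x hx) ⟨y, hy, rfl⟩).trans (le_csSup hSy ⟨x, hx, rfl⟩)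

theorem stmt6_general (n N : ℕ) (hN : 0 < N) (C : Set (Fin n → ℝ))
    (hconv : Convex ℝ C) (hcomp : IsCompact C)
    (B : Matrix (Fin n) (Fin n) ℝ) (w u : Fin N → (Fin n → ℝ))
    (hu : ∀ t, u t ∈ C) (γ : ℝ)
    (hrow : (N : ℝ)⁻¹ * ∑ t, w t ⬝ᵥ B.mulVec (u t) ≥
      sSup ((fun w' => (N : ℝ)⁻¹ * ∑ t, w' ⬝ᵥ B.mulVec (u t)) '' C) - γ)
    (hcol : (N : ℝ)⁻¹ * ∑ t, w t ⬝ᵥ B.mulVec (u t) ≤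
      sInf ((fun u' => ((N : ℝ)⁻¹ • ∑ t, w t) ⬝ᵥ B.mulVec u') '' C) + γ) :
    sInf ((fun u' => ((N : ℝ)⁻¹ • ∑ t, w t) ⬝ᵥ B.mulVec u') '' C) ≥
      sSup ((fun w' => sInf ((fun u' => w' ⬝ᵥ B.mulVec u') '' C)) '' C) - 2 * γ := by
  set ubar := (N : ℝ)⁻¹ • ∑ t, u t
  have hubar : ubar ∈ C := by
    simpa using hconv.inv_card_smul_sum_mem (univ_nonempty_iff.2 ⟨⟨0, hN⟩⟩) fun t _ => hu t
  have hmaxmin : sSup ((fun w' => sInf ((fun u' => w' ⬝ᵥ B *ᵥ u') '' C)) '' C) ≤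
      sSup ((fun w' => (N : ℝ)⁻¹ * ∑ t, w' ⬝ᵥ B *ᵥ u t) '' C) := by
    simp_rw [← dotProduct_mulVec_smul_sum]
    exact csSup_image_csInf_le_csSup (fun w' u' => w' ⬝ᵥ B *ᵥ u') hubar ⟨ubar, hubar⟩
      (fun w' _ => hcomp.bddBelow_image (by fun_prop))
      (hcomp.bddAbove_image (by fun_prop))
  linarith

/-- If the averaged play of both players has low regret, the averaged row strategy
is an approximate maxmin solution of the game on `C`. -/
theorem stmt6 (n N : ℕ) (hN : 0 < N) (C : Set (Fin n → ℝ)) (hne : C.Nonempty)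
    (hconv : Convex ℝ C) (hcomp : IsCompact C)
    (B : Matrix (Fin n) (Fin n) ℝ) (w u : Fin N → (Fin n → ℝ))
    (hw : ∀ t, w t ∈ C) (hu : ∀ t, u t ∈ C) (γ : ℝ)
    (hminimax :
      sSup ((fun w' => sInf ((fun u' => w' ⬝ᵥ B.mulVec u') '' C)) '' C) =
        sInf ((fun u' => sSup ((fun w' => w' ⬝ᵥ B.mulVec u') '' C)) '' C))
    (hrow : (N : ℝ)⁻¹ * ∑ t, w t ⬝ᵥ B.mulVec (u t) ≥
      sSup ((fun w' => (N : ℝ)⁻¹ * ∑ t, w' ⬝ᵥ B.mulVec (u t)) '' C) - γ)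
    (hcol : (N : ℝ)⁻¹ * ∑ t, w t ⬝ᵥ B.mulVec (u t) ≤
      sInf ((fun u' => ((N : ℝ)⁻¹ • ∑ t, w t) ⬝ᵥ B.mulVec u') '' C) + γ) :
    sInf ((fun u' => ((N : ℝ)⁻¹ • ∑ t, w t) ⬝ᵥ B.mulVec u') '' C) ≥
      sSup ((fun w' => sInf ((fun u' => w' ⬝ᵥ B.mulVec u') '' C)) '' C) - 2 * γ :=
  stmt6_general n N hN C hconv hcomp B w u hu γ hrow hcol
end

section
/- (Projected gradient ascent with inexact projections.) Let C ⊆ R^n be convex with diameter at most 2, B an n×n matrix with ‖Bu‖ ≤ L for all u ∈ C, and η > 0. Suppose the iterates satisfy z_{t+1} = w_t + ηBu_t with u_t ∈ C, w_t ∈ C, and the approximate projection condition ‖w − w_{t+1}‖² ≤ ‖w − z_{t+1}‖² + α‖w_t − z_{t+1}‖ for all w ∈ C. Then for all w ∈ C and all N: (1/N)∑_{t=1}^N w_tᵀBu_t ≥ (1/N)∑_{t=1}^N wᵀBu_t − (2/(ηN) + ηL²/2 + αL/2). -/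
/-!
Each step of inexact projected gradient ascent satisfies
`2η ⟪w - w_t, g_t⟫ ≤ ‖w - w_t‖² - ‖w - w_{t+1}‖² + η²L² + αηL`,
by expanding `‖w - (w_t + η g_t)‖²` in the approximate projection condition.
Summing, the distances telescope to at most `‖w - w_1‖² ≤ 4`, and dividing by `N` gives the bound.
-/

open Matrix Finset RealInnerProductSpace

section InexactProjection

variable {E : Type*} [NormedAddCommGroup E] [InnerProductSpace ℝ E]

lemma norm_sub_add_smul_sq (x y g : E) (η : ℝ) :
    ‖x - (y + η • g)‖ ^ 2 = ‖x - y‖ ^ 2 - 2 * η * ⟪x - y, g⟫ + η ^ 2 * ‖g‖ ^ 2 := by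
  rw [← sub_sub, norm_sub_sq_real, real_inner_smul_right, norm_smul, Real.norm_eq_abs, mul_pow,
    sq_abs]
  ring

lemma inner_sub_le_of_approx_proj {x y y' g : E} {η α L : ℝ} (hη : 0 < η) (hα : 0 ≤ α)
    (hg : ‖g‖ ≤ L)
    (hproj : ‖x - y'‖ ^ 2 ≤ ‖x - (y + η • g)‖ ^ 2 + α * ‖y - (y + η • g)‖) :
    ⟪x - y, g⟫ ≤ (‖x - y‖ ^ 2 - ‖x - y'‖ ^ 2) / (2 * η) + (η * L ^ 2 / 2 + α * L / 2) := by
  have hstep : ‖y - (y + η • g)‖ = η * ‖g‖ := by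
    rw [sub_add_cancel_left, norm_neg, norm_smul, Real.norm_eq_abs, abs_of_pos hη]
  rw [norm_sub_add_smul_sq, hstep] at hproj
  have hsq : η ^ 2 * ‖g‖ ^ 2 ≤ η ^ 2 * L ^ 2 := by gcongr
  have hlin : α * (η * ‖g‖) ≤ α * (η * L) := by gcongr
  calc ⟪x - y, g⟫ = 2 * η * ⟪x - y, g⟫ / (2 * η) := by field_simp
    _ ≤ ((‖x - y‖ ^ 2 - ‖x - y'‖ ^ 2) + η ^ 2 * L ^ 2 + α * (η * L)) / (2 * η) := by
        gcongr
        linarith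
    _ = _ := by field_simp; ring

lemma sum_inner_sub_le_of_approx_proj {x : E} {w g : ℕ → E} {η α L : ℝ} (hη : 0 < η)
    (hα : 0 ≤ α) (hg : ∀ t, ‖g t‖ ≤ L)
    (hproj : ∀ t, ‖x - w (t + 1)‖ ^ 2 ≤ ‖x - (w t + η • g t)‖ ^ 2 + α * ‖w t - (w t + η • g t)‖)
    (N : ℕ) :
    ∑ t ∈ Icc 1 N, ⟪x - w t, g t⟫ ≤ ‖x - w 1‖ ^ 2 / (2 * η) + N * (η * L ^ 2 / 2 + α * L / 2) := by
  set d : ℕ → ℝ := fun t ↦ ‖x - w t‖ ^ 2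
  have htele : ∑ t ∈ Icc 1 N, (d t - d (t + 1)) = d 1 - d (N + 1) := by
    rw [← Ico_add_one_right_eq_Icc, ← neg_sub (d (N + 1)) (d 1), ← sum_Ico_sub d (by omega),
      ← sum_neg_distrib]
    simp only [neg_sub]
  calc ∑ t ∈ Icc 1 N, ⟪x - w t, g t⟫
      ≤ ∑ t ∈ Icc 1 N, ((d t - d (t + 1)) / (2 * η) + (η * L ^ 2 / 2 + α * L / 2)) :=
        sum_le_sum fun t _ ↦ inner_sub_le_of_approx_proj hη hα (hg t) (hproj t)
    _ = (d 1 - d (N + 1)) / (2 * η) + N * (η * L ^ 2 / 2 + α * L / 2) := by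
        rw [sum_add_distrib, ← sum_div, htele, sum_const, Nat.card_Icc, nsmul_eq_mul,
          Nat.add_sub_cancel]
    _ ≤ d 1 / (2 * η) + N * (η * L ^ 2 / 2 + α * L / 2) := by
        have : 0 ≤ d (N + 1) := by positivity
        gcongr
        linarith

end InexactProjection

theorem stmt8_general (n N : ℕ) (hN : 0 < N) (C : Set (EuclideanSpace ℝ (Fin n)))
    (hdiam : ∀ x ∈ C, ∀ y ∈ C, ‖x - y‖ ≤ 2)
    (B : Matrix (Fin n) (Fin n) ℝ) (L η α : ℝ) (hη : 0 < η) (hα : 0 ≤ α)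
    (hL : ∀ u' ∈ C, ‖Matrix.toEuclideanLin B u'‖ ≤ L)
    (w u z : ℕ → EuclideanSpace ℝ (Fin n))
    (hwC : ∀ t, w t ∈ C) (huC : ∀ t, u t ∈ C)
    (hz : ∀ t, z (t + 1) = w t + η • Matrix.toEuclideanLin B (u t))
    (hproj : ∀ t, ∀ w' ∈ C,
      ‖w' - w (t + 1)‖ ^ 2 ≤ ‖w' - z (t + 1)‖ ^ 2 + α * ‖w t - z (t + 1)‖) :
    ∀ w' ∈ C,
      (N : ℝ)⁻¹ * ∑ t ∈ Icc 1 N, (inner ℝ (w t) (Matrix.toEuclideanLin B (u t)) : ℝ) ≥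
        (N : ℝ)⁻¹ * ∑ t ∈ Icc 1 N, (inner ℝ (w') (Matrix.toEuclideanLin B (u t)) : ℝ) -
          (2 / (η * N) + η * L ^ 2 / 2 + α * L / 2) := by
  intro w' hw'
  have hregret := sum_inner_sub_le_of_approx_proj (x := w') hη hα (fun t ↦ hL _ (huC t))
    (fun t ↦ hz t ▸ hproj t w' hw') N
  have hinit : ‖w' - w 1‖ ^ 2 ≤ 2 ^ 2 := by
    gcongr
    exact hdiam w' hw' (w 1) (hwC 1)
  have hNpos : (0 : ℝ) < N := by exact_mod_cast hN
  simp only [inner_sub_left, sum_sub_distrib] at hregret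
  rw [ge_iff_le, sub_le_iff_le_add, ← sub_le_iff_le_add', ← mul_sub]
  calc (N : ℝ)⁻¹ * (∑ t ∈ Icc 1 N, ⟪w', toEuclideanLin B (u t)⟫ -
          ∑ t ∈ Icc 1 N, ⟪w t, toEuclideanLin B (u t)⟫)
      ≤ (N : ℝ)⁻¹ * (‖w' - w 1‖ ^ 2 / (2 * η) + N * (η * L ^ 2 / 2 + α * L / 2)) := by gcongr
    _ ≤ (N : ℝ)⁻¹ * (2 ^ 2 / (2 * η) + N * (η * L ^ 2 / 2 + α * L / 2)) := by gcongr
    _ = 2 / (η * N) + η * L ^ 2 / 2 + α * L / 2 := by field_simp; ring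

/-- Projected gradient ascent with inexact projections: regret bound. -/
theorem stmt8 (n N : ℕ) (hN : 0 < N) (C : Set (EuclideanSpace ℝ (Fin n)))
    (hconv : Convex ℝ C) (hdiam : ∀ x ∈ C, ∀ y ∈ C, ‖x - y‖ ≤ 2)
    (B : Matrix (Fin n) (Fin n) ℝ) (L η α : ℝ) (hη : 0 < η) (hα : 0 ≤ α)
    (hL : ∀ u' ∈ C, ‖Matrix.toEuclideanLin B u'‖ ≤ L)
    (w u z : ℕ → EuclideanSpace ℝ (Fin n))
    (hwC : ∀ t, w t ∈ C) (huC : ∀ t, u t ∈ C)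
    (hz : ∀ t, z (t + 1) = w t + η • Matrix.toEuclideanLin B (u t))
    (hproj : ∀ t, ∀ w' ∈ C,
      ‖w' - w (t + 1)‖ ^ 2 ≤ ‖w' - z (t + 1)‖ ^ 2 + α * ‖w t - z (t + 1)‖) :
    ∀ w' ∈ C,
      (N : ℝ)⁻¹ * ∑ t ∈ Icc 1 N, (inner ℝ (w t) (Matrix.toEuclideanLin B (u t)) : ℝ) ≥
        (N : ℝ)⁻¹ * ∑ t ∈ Icc 1 N, (inner ℝ (w') (Matrix.toEuclideanLin B (u t)) : ℝ) -
          (2 / (η * N) + η * L ^ 2 / 2 + α * L / 2) :=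
  stmt8_general n N hN C hdiam B L η α hη hα hL w u z hwC huC hz hproj
end

section
/- (Frank–Wolfe-style inner loop guarantee.) Let C ⊆ R^n be convex with ‖v‖ ≤ 1 for all v ∈ C, z ∈ R^n, F(s,v) = ‖s−z‖² − ‖s−v‖², and let v* ∈ C be the projection of z onto C. Suppose v_1 ∈ C and for t = 1,…,N: s_t ∈ argmin_{s∈C} s·(v_t − z) and v_{t+1} = (1−ν)v_t + ν s_t. Then (1/N)∑_{t=1}^N F(s_t, v_t) ≥ (1/N)∑_{t=1}^N F(s_t, v*) − (‖v* − v_1‖²/(νN) + 4ν). -/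
/-!
For any point `w` (here `v*`), one step `v' = (1 - ν) v + ν s` satisfies the exact identity
`‖w - v'‖² = (1 - ν) ‖w - v‖² + ν (‖s - w‖² - ‖s - v‖²) + ν² ‖s - v‖²`,
and `‖s - w‖² - ‖s - v‖² = F(s, v) - F(s, w)` since the `z`-terms of `F` cancel. All iterates stay
in the unit ball by convexity, so `‖s - v‖ ≤ 2`, and each step costs at most
`ν (F(s_t, v_t) - F(s_t, w)) + 4ν²` in squared distance to `w`. Summing, the distances telescope
and are nonnegative, which gives the averaged bound after dividing by `ν N`.
-/

open Finset RealInnerProductSpace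

theorem le_add_sum_Icc_of_succ_le {a b : ℕ → ℝ} (h : ∀ t, 1 ≤ t → a (t + 1) ≤ a t + b t) :
    ∀ N : ℕ, a (N + 1) ≤ a 1 + ∑ t ∈ Icc 1 N, b t
  | 0 => by simp
  | N + 1 => by
    rw [sum_Icc_succ_top (by omega)]
    linarith [h (N + 1) (by omega), le_add_sum_Icc_of_succ_le h N]

section FrankWolfe

variable {E : Type*} [NormedAddCommGroup E] [InnerProductSpace ℝ E]

theorem norm_sub_convexComb_sq (w v s : E) (ν : ℝ) :
    ‖w - ((1 - ν) • v + ν • s)‖ ^ 2 =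
      (1 - ν) * ‖w - v‖ ^ 2 + ν * (‖s - w‖ ^ 2 - ‖s - v‖ ^ 2) + ν ^ 2 * ‖s - v‖ ^ 2 := by
  have hstep : w - ((1 - ν) • v + ν • s) = (w - v) - ν • (s - v) := by module
  have hsw : s - w = (s - v) - (w - v) := by abel
  rw [hstep, hsw, norm_sub_sq_real (w - v), norm_sub_sq_real (s - v), real_inner_smul_right,
    norm_smul, Real.norm_eq_abs, mul_pow, sq_abs, real_inner_comm (s - v)]
  ring

theorem norm_sub_convexComb_sq_le {w v s : E} {ν : ℝ} (hν : 0 ≤ ν) (hsv : ‖s - v‖ ≤ 2) :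
    ‖w - ((1 - ν) • v + ν • s)‖ ^ 2 ≤
      ‖w - v‖ ^ 2 + ν * (‖s - w‖ ^ 2 - ‖s - v‖ ^ 2) + 4 * ν ^ 2 := by
  have hsq : ‖s - v‖ ^ 2 ≤ 4 := by nlinarith [norm_nonneg (s - v)]
  rw [norm_sub_convexComb_sq]
  nlinarith [mul_nonneg hν (sq_nonneg ‖w - v‖), mul_le_mul_of_nonneg_left hsq (sq_nonneg ν)]

variable {C : Set E} {ν : ℝ} {s v : ℕ → E}

theorem frankWolfe_iterate_mem (hconv : Convex ℝ C) (hν : 0 ≤ ν) (hν1 : ν ≤ 1) (hv1 : v 1 ∈ C)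
    (hsC : ∀ t, s t ∈ C) (hupd : ∀ t, v (t + 1) = (1 - ν) • v t + ν • s t) {t : ℕ}
    (ht : 1 ≤ t) : v t ∈ C := by
  induction t, ht using Nat.le_induction with
  | base => exact hv1
  | succ t _ ih => rw [hupd t]; exact hconv ih (hsC t) (by linarith) hν (by ring)

theorem frankWolfe_sum_le (hconv : Convex ℝ C) (hball : ∀ x ∈ C, ‖x‖ ≤ 1) (hν : 0 ≤ ν)
    (hν1 : ν ≤ 1) (hv1 : v 1 ∈ C) (hsC : ∀ t, s t ∈ C)
    (hupd : ∀ t, v (t + 1) = (1 - ν) • v t + ν • s t) (w : E) (N : ℕ) :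
    ν * ∑ t ∈ Icc 1 N, (‖s t - v t‖ ^ 2 - ‖s t - w‖ ^ 2) ≤ ‖w - v 1‖ ^ 2 + 4 * ν ^ 2 * N := by
  have hstep : ∀ t, 1 ≤ t → ‖w - v (t + 1)‖ ^ 2 ≤
      ‖w - v t‖ ^ 2 + (4 * ν ^ 2 - ν * (‖s t - v t‖ ^ 2 - ‖s t - w‖ ^ 2)) := by
    intro t ht
    have hsv : ‖s t - v t‖ ≤ 2 := by
      linarith [norm_sub_le (s t) (v t), hball _ (hsC t),
        hball _ (frankWolfe_iterate_mem hconv hν hν1 hv1 hsC hupd ht)]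
    rw [hupd t]
    linarith [norm_sub_convexComb_sq_le (w := w) hν hsv]
  have hsum := le_add_sum_Icc_of_succ_le (a := fun t ↦ ‖w - v t‖ ^ 2) hstep N
  rw [sum_sub_distrib, sum_const, Nat.card_Icc, nsmul_eq_mul, ← mul_sum] at hsum
  push_cast at hsum
  linarith [sq_nonneg ‖w - v (N + 1)‖]

end FrankWolfe

theorem stmt12_general (n N : ℕ) (hN : 0 < N) (C : Set (EuclideanSpace ℝ (Fin n)))
    (hconv : Convex ℝ C) (hball : ∀ v' ∈ C, ‖v'‖ ≤ 1)
    (z : EuclideanSpace ℝ (Fin n))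
    (vstar : EuclideanSpace ℝ (Fin n))
    (ν : ℝ) (hν : 0 < ν) (hν1 : ν ≤ 1)
    (s v : ℕ → EuclideanSpace ℝ (Fin n)) (hv1 : v 1 ∈ C)
    (hsC : ∀ t, s t ∈ C)
    (hupd : ∀ t, v (t + 1) = (1 - ν) • v t + ν • s t) :
    (N : ℝ)⁻¹ * ∑ t ∈ Icc 1 N, (‖s t - z‖ ^ 2 - ‖s t - v t‖ ^ 2) ≥
      (N : ℝ)⁻¹ * ∑ t ∈ Icc 1 N, (‖s t - z‖ ^ 2 - ‖s t - vstar‖ ^ 2) -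
        (‖vstar - v 1‖ ^ 2 / (ν * N) + 4 * ν) := by
  have hbound := frankWolfe_sum_le hconv hball hν.le hν1 hv1 hsC hupd vstar N
  have hgap : ∑ t ∈ Icc 1 N, (‖s t - z‖ ^ 2 - ‖s t - vstar‖ ^ 2) -
      ∑ t ∈ Icc 1 N, (‖s t - z‖ ^ 2 - ‖s t - v t‖ ^ 2) =
      ∑ t ∈ Icc 1 N, (‖s t - v t‖ ^ 2 - ‖s t - vstar‖ ^ 2) := by
    rw [← sum_sub_distrib]; congr 1 with t; ring
  have hNpos : (0 : ℝ) < N := by exact_mod_cast hN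
  have hfinal : (N : ℝ)⁻¹ * ∑ t ∈ Icc 1 N, (‖s t - v t‖ ^ 2 - ‖s t - vstar‖ ^ 2) ≤
      ‖vstar - v 1‖ ^ 2 / (ν * N) + 4 * ν := by
    rw [inv_mul_le_iff₀ hNpos, mul_add, mul_div_assoc', div_add' _ _ _ (by positivity),
      le_div_iff₀ (by positivity)]
    nlinarith
  rw [← hgap, mul_sub] at hfinal
  linarith

/-- Frank–Wolfe-style inner loop guarantee. -/
theorem stmt12 (n N : ℕ) (hN : 0 < N) (C : Set (EuclideanSpace ℝ (Fin n)))
    (hconv : Convex ℝ C) (hball : ∀ v' ∈ C, ‖v'‖ ≤ 1)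
    (z : EuclideanSpace ℝ (Fin n))
    (vstar : EuclideanSpace ℝ (Fin n)) (hvstarC : vstar ∈ C)
    (hproj : ∀ v' ∈ C, ‖vstar - z‖ ≤ ‖v' - z‖)
    (ν : ℝ) (hν : 0 < ν) (hν1 : ν ≤ 1)
    (s v : ℕ → EuclideanSpace ℝ (Fin n)) (hv1 : v 1 ∈ C)
    (hsC : ∀ t, s t ∈ C)
    (hbest : ∀ t, ∀ s' ∈ C, (inner ℝ (s t) (v t - z) : ℝ) ≤ (inner ℝ s' (v t - z) : ℝ))
    (hupd : ∀ t, v (t + 1) = (1 - ν) • v t + ν • s t) :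
    (N : ℝ)⁻¹ * ∑ t ∈ Icc 1 N, (‖s t - z‖ ^ 2 - ‖s t - v t‖ ^ 2) ≥
      (N : ℝ)⁻¹ * ∑ t ∈ Icc 1 N, (‖s t - z‖ ^ 2 - ‖s t - vstar‖ ^ 2) -
        (‖vstar - v 1‖ ^ 2 / (ν * N) + 4 * ν) :=
  stmt12_general n N hN C hconv hball z vstar ν hν hν1 s v hv1 hsC hupd
end
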